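/- arXiv:quant-ph/0011019 — 9 statements merged into one kernel-verified Lean document; each statement's English description precedes it below -/
import Mathlib

section
/- Let V be a finite-dimensional complex inner product space with orthonormal basis w_1, …, w_N, let 1 ≤ l < N, let E be a nonzero real number, and let β_1, …, β_N be nonnegative reals with ∑_{i=1}^N β_i² = 1. Set y = (∑_{i=1}^l β_i²)^{1/2} and assume 0 < y < 1. Define w̃ = (1/y)·∑_{i=1}^l β_i w_i, r = (1/√(1−y²))·∑_{i=l+1}^N β_i w_i, s = ∑_{i=1}^N β_i w_i, and the linear operator H = E·∑_{i=1}^l |w_i⟩⟨w_i| + E·|s⟩⟨s|. Then H w̃ = E·((1+y²)·w̃ + y·√(1−y²)·r) and H r = E·(y·√(1−y²)·w̃ + (1−y²)·r); in particular the two-dimensional subspace spanned by w̃ and r is invariant under H, on which H has the matrix representation E·!![1+y², y√(1−y²); y√(1−y²), 1−y²]. -/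
/-!
With `c = √(1 - y²)`, the vectors `w̃` and `r` are orthonormal (they are normalized combinations
of disjoint sets of the `wᵢ`) and `s = y w̃ + c r`. The projection part of `H` fixes `w̃` and kills
`r`, while `⟨s, w̃⟩ = y` and `⟨s, r⟩ = c`; expanding `H w̃ = E (w̃ + y s)` and `H r = E (c s)`
gives the matrix, with `c² = 1 - y²`.
-/

open Finset

section Orthonormal

variable {𝕜 E ι : Type*} [RCLike 𝕜] [NormedAddCommGroup E] [InnerProductSpace 𝕜 E]
  {v : ι → E} {s t : Finset ι}

theorem Orthonormal.inner_right_sum_of_notMem (hv : Orthonormal 𝕜 v) (c : ι → 𝕜) {i : ι}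
    (hi : i ∉ t) : inner 𝕜 (v i) (∑ j ∈ t, c j • v j) = 0 := by
  classical
  simp [inner_sum, inner_smul_right, orthonormal_iff_ite.mp hv, hi]

theorem Orthonormal.sum_inner_smul_smul_sum (hv : Orthonormal 𝕜 v) (k : 𝕜) (c : ι → 𝕜) :
    ∑ i ∈ t, inner 𝕜 (v i) (k • ∑ j ∈ t, c j • v j) • v i = k • ∑ j ∈ t, c j • v j := by
  simp_rw [inner_smul_right, mul_smul, ← smul_sum]
  congr 1
  exact sum_congr rfl fun i hi => by rw [hv.inner_right_sum c hi]

theorem Orthonormal.sum_inner_smul_smul_sum_of_disjoint (hv : Orthonormal 𝕜 v)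
    (hst : Disjoint s t) (k : 𝕜) (c : ι → 𝕜) :
    ∑ i ∈ s, inner 𝕜 (v i) (k • ∑ j ∈ t, c j • v j) • v i = 0 :=
  sum_eq_zero fun i hi => by
    rw [inner_smul_right, hv.inner_right_sum_of_notMem c (disjoint_left.mp hst hi),
      mul_zero, zero_smul]

theorem Orthonormal.inner_smul_sum_smul_sum_of_disjoint (hv : Orthonormal 𝕜 v)
    (hst : Disjoint s t) (k k' : 𝕜) (c d : ι → 𝕜) :
    inner 𝕜 (k • ∑ i ∈ s, c i • v i) (k' • ∑ j ∈ t, d j • v j) = 0 := by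
  simp_rw [inner_smul_left, inner_smul_right, sum_inner, inner_smul_left]
  rw [sum_eq_zero fun i hi => by
    rw [hv.inner_right_sum_of_notMem d (disjoint_left.mp hst hi), mul_zero]]
  simp

end Orthonormal

theorem sum_filter_lt_add_sum_filter_le {ι α M : Type*} [Fintype ι] [LinearOrder α]
    [AddCommMonoid M] (g : ι → α) (a : α) (f : ι → M) :
    ∑ i ∈ univ.filter (fun i => g i < a), f i + ∑ i ∈ univ.filter (fun i => a ≤ g i), f i =
      ∑ i, f i := by
  simpa only [not_lt] using sum_filter_add_sum_filter_not univ (fun i => g i < a) f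

section Complex

variable {V : Type*} [NormedAddCommGroup V] [InnerProductSpace ℂ V]

theorem Orthonormal.inner_self_normalize_sum_ofReal {ι : Type*} {w : ι → V}
    (hw : Orthonormal ℂ w) {t : Finset ι} {β : ι → ℝ} {y : ℝ} (hy : y ≠ 0)
    (hβ : ∑ i ∈ t, β i ^ 2 = y ^ 2) :
    inner ℂ ((1 / (y : ℂ)) • ∑ i ∈ t, (β i : ℂ) • w i)
      ((1 / (y : ℂ)) • ∑ i ∈ t, (β i : ℂ) • w i) = 1 := by
  have hβC : ∑ i ∈ t, (β i : ℂ) ^ 2 = (y : ℂ) ^ 2 := by exact_mod_cast hβ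
  rw [inner_smul_left, inner_smul_right, hw.inner_sum]
  have hyC : (y : ℂ) ≠ 0 := by exact_mod_cast hy
  simp only [map_div₀, map_one, Complex.conj_ofReal, ← sq, hβC]
  field_simp

theorem apply_eq_of_projection_add_rankOne {P H : V → V} {u v s : V} {E a b : ℝ}
    (huu : inner ℂ u u = 1) (hvv : inner ℂ v v = 1) (huv : inner ℂ u v = 0)
    (hs : s = (a : ℂ) • u + (b : ℂ) • v) (hPu : P u = u) (hPv : P v = 0)
    (hH : ∀ x, H x = (E : ℂ) • P x + (E : ℂ) • inner ℂ s x • s) :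
    H u = (E : ℂ) • (((1 + a ^ 2 : ℝ) : ℂ) • u + ((a * b : ℝ) : ℂ) • v) ∧
    H v = (E : ℂ) • (((a * b : ℝ) : ℂ) • u + ((b ^ 2 : ℝ) : ℂ) • v) := by
  have hvu : inner ℂ v u = 0 := by rw [← inner_conj_symm, huv, map_zero]
  have hsu : inner ℂ s u = a := by
    rw [hs, inner_add_left, inner_smul_left, inner_smul_left, huu, hvu, Complex.conj_ofReal,
      Complex.conj_ofReal]
    ring
  have hsv : inner ℂ s v = b := by
    rw [hs, inner_add_left, inner_smul_left, inner_smul_left, hvv, huv, Complex.conj_ofReal,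
      Complex.conj_ofReal]
    ring
  constructor
  · rw [hH, hPu, hsu, hs]; push_cast; module
  · rw [hH, hPv, hsv, hs]; push_cast; module

end Complex

theorem LinearMap.apply_mem_span_pair {R M : Type*} [Semiring R] [AddCommMonoid M]
    [Module R M] (f : M →ₗ[R] M) {u v : M} (hu : f u ∈ Submodule.span R {u, v})
    (hv : f v ∈ Submodule.span R {u, v}) :
    ∀ x ∈ Submodule.span R {u, v}, f x ∈ Submodule.span R {u, v} := by
  have : Submodule.span R {u, v} ≤ (Submodule.span R {u, v}).comap f :=
    Submodule.span_le.mpr (Set.insert_subset_iff.mpr ⟨hu, Set.singleton_subset_iff.mpr hv⟩)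
  exact fun x hx => this hx

theorem multiobject_hamiltonian_invariant_plane_general
    {V : Type*} [NormedAddCommGroup V] [InnerProductSpace ℂ V]
    {N l : ℕ}
    (w : Fin N → V) (hw : Orthonormal ℂ w)
    (E : ℝ)
    (β : Fin N → ℝ)
    (hβsum : ∑ i, (β i) ^ 2 = 1)
    (y : ℝ)
    (hy : y = Real.sqrt (∑ i ∈ univ.filter (fun i : Fin N => (i : ℕ) < l), (β i) ^ 2))
    (hy0 : 0 < y) (hy1 : y < 1)
    (wt r s : V)
    (hwt : wt = (1 / (y : ℂ)) •
        ∑ i ∈ univ.filter (fun i : Fin N => (i : ℕ) < l), (β i : ℂ) • w i)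
    (hr : r = (1 / (Real.sqrt (1 - y ^ 2) : ℂ)) •
        ∑ i ∈ univ.filter (fun i : Fin N => l ≤ (i : ℕ)), (β i : ℂ) • w i)
    (hs : s = ∑ i, (β i : ℂ) • w i)
    (H : V →ₗ[ℂ] V)
    (hH : ∀ v, H v =
        (E : ℂ) • (∑ i ∈ univ.filter (fun i : Fin N => (i : ℕ) < l),
            (inner ℂ (w i) v : ℂ) • w i)
          + (E : ℂ) • (inner ℂ s v : ℂ) • s) :
    H wt = (E : ℂ) • (((1 + y ^ 2 : ℝ) : ℂ) • wt
        + ((y * Real.sqrt (1 - y ^ 2) : ℝ) : ℂ) • r) ∧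
    H r = (E : ℂ) • (((y * Real.sqrt (1 - y ^ 2) : ℝ) : ℂ) • wt
        + ((1 - y ^ 2 : ℝ) : ℂ) • r) ∧
    ∀ v ∈ Submodule.span ℂ ({wt, r} : Set V),
      H v ∈ Submodule.span ℂ ({wt, r} : Set V) := by
  set A := univ.filter (fun i : Fin N => (i : ℕ) < l)
  set B := univ.filter (fun i : Fin N => l ≤ (i : ℕ))
  set c := Real.sqrt (1 - y ^ 2)
  have hAB : Disjoint A B := disjoint_filter.mpr fun i _ h => not_le.mpr h
  have hA2 : ∑ i ∈ A, β i ^ 2 = y ^ 2 := by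
    rw [hy, Real.sq_sqrt (sum_nonneg fun i _ => sq_nonneg _)]
  have hc2 : c ^ 2 = 1 - y ^ 2 := Real.sq_sqrt (by nlinarith)
  have hB2 : ∑ i ∈ B, β i ^ 2 = c ^ 2 := by
    rw [hc2, ← hβsum, ← hA2, ← sum_filter_lt_add_sum_filter_le (fun i : Fin N => (i : ℕ)) l]
    ring
  have hc : c ≠ 0 := (Real.sqrt_pos.mpr (by nlinarith)).ne'
  have hs_decomp : s = (y : ℂ) • wt + (c : ℂ) • r := by
    rw [hwt, hr, smul_smul, smul_smul, mul_one_div_cancel (by exact_mod_cast hy0.ne'),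
      mul_one_div_cancel (by exact_mod_cast hc), one_smul, one_smul, hs,
      sum_filter_lt_add_sum_filter_le (fun i : Fin N => (i : ℕ)) l]
  obtain ⟨hHwt, hHr⟩ := apply_eq_of_projection_add_rankOne
    (hwt ▸ hw.inner_self_normalize_sum_ofReal hy0.ne' hA2)
    (hr ▸ hw.inner_self_normalize_sum_ofReal hc hB2)
    (hwt ▸ hr ▸ hw.inner_smul_sum_smul_sum_of_disjoint hAB _ _ _ _) hs_decomp
    (hwt ▸ hw.sum_inner_smul_smul_sum _ _)
    (hr ▸ hw.sum_inner_smul_smul_sum_of_disjoint hAB _ _) hH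
  rw [hc2] at hHr
  have hmem (a b : ℝ) : (E : ℂ) • ((a : ℂ) • wt + (b : ℂ) • r) ∈
      Submodule.span ℂ ({wt, r} : Set V) :=
    Submodule.smul_mem _ _ (Submodule.mem_span_pair.mpr ⟨_, _, rfl⟩)
  exact ⟨hHwt, hHr, H.apply_mem_span_pair (hHwt ▸ hmem _ _) (hHr ▸ hmem _ _)⟩

/-- **Theorem 2.1(1)** of Chen–Diao: the search Hamiltonian
`H = E ∑_{i<l} |wᵢ⟩⟨wᵢ| + E |s⟩⟨s|` leaves the plane `span{w̃, r}` invariant,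
acting on it by the matrix `E·!![1+y², y√(1−y²); y√(1−y²), 1−y²]`. -/
theorem multiobject_hamiltonian_invariant_plane
    {V : Type*} [NormedAddCommGroup V] [InnerProductSpace ℂ V] [FiniteDimensional ℂ V]
    {N l : ℕ} (hl : 1 ≤ l) (hlN : l < N)
    (w : Fin N → V) (hw : Orthonormal ℂ w)
    (E : ℝ) (hE : E ≠ 0)
    (β : Fin N → ℝ) (hβ : ∀ i, 0 ≤ β i)
    (hβsum : ∑ i, (β i) ^ 2 = 1)
    (y : ℝ)
    (hy : y = Real.sqrt (∑ i ∈ univ.filter (fun i : Fin N => (i : ℕ) < l), (β i) ^ 2))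
    (hy0 : 0 < y) (hy1 : y < 1)
    (wt r s : V)
    (hwt : wt = (1 / (y : ℂ)) •
        ∑ i ∈ univ.filter (fun i : Fin N => (i : ℕ) < l), (β i : ℂ) • w i)
    (hr : r = (1 / (Real.sqrt (1 - y ^ 2) : ℂ)) •
        ∑ i ∈ univ.filter (fun i : Fin N => l ≤ (i : ℕ)), (β i : ℂ) • w i)
    (hs : s = ∑ i, (β i : ℂ) • w i)
    (H : V →ₗ[ℂ] V)
    (hH : ∀ v, H v =
        (E : ℂ) • (∑ i ∈ univ.filter (fun i : Fin N => (i : ℕ) < l),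
            (inner ℂ (w i) v : ℂ) • w i)
          + (E : ℂ) • (inner ℂ s v : ℂ) • s) :
    H wt = (E : ℂ) • (((1 + y ^ 2 : ℝ) : ℂ) • wt
        + ((y * Real.sqrt (1 - y ^ 2) : ℝ) : ℂ) • r) ∧
    H r = (E : ℂ) • (((y * Real.sqrt (1 - y ^ 2) : ℝ) : ℂ) • wt
        + ((1 - y ^ 2 : ℝ) : ℂ) • r) ∧
    ∀ v ∈ Submodule.span ℂ ({wt, r} : Set V),
      H v ∈ Submodule.span ℂ ({wt, r} : Set V) :=
  multiobject_hamiltonian_invariant_plane_general w hw E β hβsum y hy hy0 hy1 wt r s hwt hr hs H hH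
end

section
/- Let E, t, y be real numbers with 0 ≤ y ≤ 1, and let M(E,y) be the 2×2 complex matrix E·!![1+y², y·√(1−y²); y·√(1−y²), 1−y²]. Then the matrix exponential exp(−i·t·M(E,y)) equals e^{−iEt}·!![cos(Eyt) − i·y·sin(Eyt), −√(1−y²)·i·sin(Eyt); −√(1−y²)·i·sin(Eyt), cos(Eyt) + i·y·sin(Eyt)]. -/
/-!
On the invariant plane the Hamiltonian is `E (1 + y R)` with `R = !![y, √(1-y²); √(1-y²), -y]`,
a reflection: `R² = 1` because `y² ≤ 1`. The scalar part commutes with `R` and contributes the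
phase `e^{-iEt}`, while for `R² = 1` the exponential series splits into its even and odd parts,
`exp (z R) = cosh z + sinh z R`; at `z = -iEyt` this is `cos (Eyt) - i sin (Eyt) R`.
-/

open Matrix

/-- The matrix representation of the search Hamiltonian on its invariant plane. -/
noncomputable def searchHamiltonianMatrix (E y : ℝ) : Matrix (Fin 2) (Fin 2) ℂ :=
  (E : ℂ) • !![((1 + y ^ 2 : ℝ) : ℂ), ((y * Real.sqrt (1 - y ^ 2) : ℝ) : ℂ);
               ((y * Real.sqrt (1 - y ^ 2) : ℝ) : ℂ), ((1 - y ^ 2 : ℝ) : ℂ)]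

namespace NormedSpace

section Involution

variable {𝔸 : Type*} [Ring 𝔸] [Algebra ℂ 𝔸] [TopologicalSpace 𝔸] [IsTopologicalRing 𝔸]
  [ContinuousSMul ℂ 𝔸] [T2Space 𝔸]

theorem exp_smul_of_mul_self_eq_one {A : 𝔸} (hA : A * A = 1) (z : ℂ) :
    exp (z • A) = Complex.cosh z • 1 + Complex.sinh z • A := by
  have h_even (n : ℕ) : A ^ (2 * n) = 1 := by rw [pow_mul, sq, hA, one_pow]
  have h_odd (n : ℕ) : A ^ (2 * n + 1) = A := by rw [pow_succ, h_even, one_mul]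
  rw [exp_eq_tsum ℂ]
  refine HasSum.tsum_eq (HasSum.even_add_odd ?_ ?_)
  · convert (Complex.hasSum_cosh z).smul_const (1 : 𝔸) using 2 with n
    rw [smul_pow, h_even, smul_smul, div_eq_inv_mul]
  · convert (Complex.hasSum_sinh z).smul_const A using 2 with n
    rw [smul_pow, h_odd, smul_smul, div_eq_inv_mul]

end Involution

section Banach

variable {𝔸 : Type*} [NormedRing 𝔸] [NormedAlgebra ℂ 𝔸] [CompleteSpace 𝔸]

theorem exp_smul_one_add_smul_of_mul_self_eq_one {A : 𝔸} (hA : A * A = 1) (c d : ℂ) :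
    exp (c • (1 : 𝔸) + d • A) = Complex.exp c • (Complex.cosh d • 1 + Complex.sinh d • A) := by
  have hball (x : 𝔸) : x ∈ Metric.eball (0 : 𝔸) (expSeries ℂ 𝔸).radius := by
    simp [expSeries_radius_eq_top]
  rw [exp_add_of_commute_of_mem_ball (𝕂 := ℂ)
      ((Commute.one_left A).smul_left c |>.smul_right d) (hball _) (hball _),
    ← Algebra.algebraMap_eq_smul_one, ← algebraMap_exp_comm, Algebra.algebraMap_eq_smul_one,
    ← Complex.exp_eq_exp_ℂ, smul_one_mul, exp_smul_of_mul_self_eq_one hA]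

end Banach

end NormedSpace

theorem Matrix.exp_smul_one_add_smul_of_mul_self_eq_one {n : Type*} [Fintype n] [DecidableEq n]
    {A : Matrix n n ℂ} (hA : A * A = 1) (c d : ℂ) :
    NormedSpace.exp (c • (1 : Matrix n n ℂ) + d • A) =
      Complex.exp c • (Complex.cosh d • 1 + Complex.sinh d • A) :=
  -- `exp` depends only on the topology, so any Banach-algebra norm on matrices will do.
  open scoped Norms.Operator in NormedSpace.exp_smul_one_add_smul_of_mul_self_eq_one hA c d

noncomputable def searchReflection (y : ℝ) : Matrix (Fin 2) (Fin 2) ℂ :=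
  !![(y : ℂ), (√(1 - y ^ 2) : ℂ); (√(1 - y ^ 2) : ℂ), -(y : ℂ)]

theorem searchReflection_mul_self {y : ℝ} (hy : y ^ 2 ≤ 1) :
    searchReflection y * searchReflection y = 1 := by
  have hs : ((√(1 - y ^ 2) : ℝ) : ℂ) * (√(1 - y ^ 2) : ℝ) = 1 - (y : ℂ) * y := by
    rw [← Complex.ofReal_mul, Real.mul_self_sqrt (by linarith)]; push_cast; ring
  rw [searchReflection, mul_fin_two, one_fin_two]
  ext i j
  fin_cases i <;> fin_cases j <;> simp [hs] <;> ring

theorem searchHamiltonianMatrix_eq_smul_one_add_smul_searchReflection (E y : ℝ) :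
    searchHamiltonianMatrix E y = (E : ℂ) • (1 + (y : ℂ) • searchReflection y) := by
  rw [searchHamiltonianMatrix, searchReflection]
  ext i j
  fin_cases i <;> fin_cases j <;> simp [sq, sub_eq_add_neg]

/-- **Formula (2.16)** of Chen–Diao: the evolution operator `e^{−iHt}` on the
invariant plane. -/
theorem exp_neg_I_t_searchHamiltonianMatrix (E t y : ℝ) (hy0 : 0 ≤ y) (hy1 : y ≤ 1) :
    NormedSpace.exp ((-(Complex.I * (t : ℂ))) • searchHamiltonianMatrix E y) =
      Complex.exp (-(Complex.I * (E : ℂ) * (t : ℂ))) •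
        !![(Real.cos (E * y * t) : ℂ) - Complex.I * (y : ℂ) * (Real.sin (E * y * t) : ℂ),
           -(Real.sqrt (1 - y ^ 2) : ℂ) * Complex.I * (Real.sin (E * y * t) : ℂ);
           -(Real.sqrt (1 - y ^ 2) : ℂ) * Complex.I * (Real.sin (E * y * t) : ℂ),
           (Real.cos (E * y * t) : ℂ) + Complex.I * (y : ℂ) * (Real.sin (E * y * t) : ℂ)] := by
  have hy : y ^ 2 ≤ 1 := by nlinarith
  have hdecomp : (-(Complex.I * (t : ℂ))) • searchHamiltonianMatrix E y =
      (-(Complex.I * E * t)) • 1 + (-(((E * y * t : ℝ) : ℂ) * Complex.I)) • searchReflection y := by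
    rw [searchHamiltonianMatrix_eq_smul_one_add_smul_searchReflection]
    push_cast
    module
  rw [hdecomp, Matrix.exp_smul_one_add_smul_of_mul_self_eq_one (searchReflection_mul_self hy),
    Complex.cosh_neg, Complex.cosh_mul_I, Complex.sinh_neg, Complex.sinh_mul_I,
    ← Complex.ofReal_cos, ← Complex.ofReal_sin]
  ext i j
  fin_cases i <;> fin_cases j <;> simp [searchReflection] <;> ring
end

section
/- Let E, t, y be real numbers with 0 ≤ y ≤ 1, let M(E,y) be the 2×2 complex matrix E·!![1+y², y·√(1−y²); y·√(1−y²), 1−y²], and let s(y) = (y, √(1−y²))ᵀ ∈ ℂ². Then exp(−i·t·M(E,y)) applied to s(y) equals e^{−iEt}·( y·cos(Eyt) − i·sin(Eyt), √(1−y²)·cos(Eyt) )ᵀ. -/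
/-!
The vectors `(y ± 1, √(1 - y²))` are eigenvectors of `M(E, y)` with eigenvalues `E (1 ± y)`,
and `s(y)` is their average. The exponential of a matrix acts on an eigenvector by the scalar
exponential of its eigenvalue, and the two phases
`e^{-iEt(1 ± y)} = e^{-iEt} (cos (Eyt) ∓ i sin (Eyt))` recombine into the formula.
-/

open Matrix

theorem Matrix.pow_mulVec_of_mulVec_eq_smul {R m : Type*} [CommSemiring R] [Fintype m]
    [DecidableEq m] {A : Matrix m m R} {μ : R} {v : m → R} (h : A *ᵥ v = μ • v) (n : ℕ) :
    (A ^ n) *ᵥ v = μ ^ n • v := by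
  induction n with
  | zero => simp
  | succ n ih => rw [pow_succ, ← mulVec_mulVec, h, mulVec_smul, ih, smul_smul, pow_succ']

theorem Matrix.exp_mulVec_of_mulVec_eq_smul {𝕂 m : Type*} [RCLike 𝕂] [Fintype m] [DecidableEq m]
    {A : Matrix m m 𝕂} {μ : 𝕂} {v : m → 𝕂} (h : A *ᵥ v = μ • v) :
    NormedSpace.exp A *ᵥ v = NormedSpace.exp μ • v := by
  open scoped Norms.Operator in
  have hA := (NormedSpace.exp_series_hasSum_exp' (𝕂 := 𝕂) A).map
    (mulVec.addMonoidHomLeft v) (continuous_id.matrix_mulVec continuous_const)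
  have hμ := (NormedSpace.exp_series_hasSum_exp' (𝕂 := 𝕂) μ).smul_const v
  refine hA.unique ?_
  convert hμ using 1
  funext n
  simp [mulVec.addMonoidHomLeft, smul_mulVec, pow_mulVec_of_mulVec_eq_smul h, smul_smul]

theorem searchHamiltonianMatrix_mulVec_eigenvector (E : ℝ) {y : ℝ} (hy : y ^ 2 ≤ 1) {σ : ℂ}
    (hσ : σ ^ 2 = 1) :
    searchHamiltonianMatrix E y *ᵥ ![(y : ℂ) + σ, (Real.sqrt (1 - y ^ 2) : ℂ)] =
      ((E : ℂ) * (1 + σ * y)) • ![(y : ℂ) + σ, (Real.sqrt (1 - y ^ 2) : ℂ)] := by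
  have hs : (Real.sqrt (1 - y ^ 2) : ℂ) ^ 2 = 1 - (y : ℂ) ^ 2 := by
    exact_mod_cast Real.sq_sqrt (sub_nonneg.mpr hy)
  rw [searchHamiltonianMatrix, smul_mulVec]
  simp only [cons_mulVec, empty_mulVec, vec2_dotProduct', smul_vec2, smul_eq_mul]
  refine vec2_eq ?_ ?_ <;> push_cast
  · linear_combination (E : ℂ) * y * hs - (E : ℂ) * y * hσ
  · ring

/-- **Formula (2.17)** of Chen–Diao: the solution `ψ(t) = e^{−iHt}|s⟩` of the
Schrödinger equation with initial state `s = (y, √(1−y²))ᵀ`. -/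
theorem exp_neg_I_t_searchHamiltonianMatrix_mulVec (E t y : ℝ) (hy0 : 0 ≤ y) (hy1 : y ≤ 1) :
    (NormedSpace.exp ((-(Complex.I * (t : ℂ))) • searchHamiltonianMatrix E y)).mulVec
        ![(y : ℂ), (Real.sqrt (1 - y ^ 2) : ℂ)] =
      Complex.exp (-(Complex.I * (E : ℂ) * (t : ℂ))) •
        ![(y : ℂ) * (Real.cos (E * y * t) : ℂ) - Complex.I * (Real.sin (E * y * t) : ℂ),
          (Real.sqrt (1 - y ^ 2) : ℂ) * (Real.cos (E * y * t) : ℂ)] := by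
  have hy : y ^ 2 ≤ 1 := by nlinarith
  set s : ℂ := (Real.sqrt (1 - y ^ 2) : ℂ)
  have hexp {σ : ℂ} (hσ : σ ^ 2 = 1) :
      NormedSpace.exp ((-(Complex.I * t)) • searchHamiltonianMatrix E y) *ᵥ ![(y : ℂ) + σ, s] =
        (Complex.exp (-(Complex.I * E * t)) * Complex.exp (-σ * (E * y * t) * Complex.I)) •
          ![(y : ℂ) + σ, s] := by
    rw [exp_mulVec_of_mulVec_eq_smul (μ := -(Complex.I * t) * (E * (1 + σ * y))),
      ← Complex.exp_eq_exp_ℂ, ← Complex.exp_add]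
    · ring_nf
    · rw [smul_mulVec, searchHamiltonianMatrix_mulVec_eigenvector E hy hσ, smul_smul]
  have hsplit : ![(y : ℂ), s] = (2 : ℂ)⁻¹ • (![(y : ℂ) + 1, s] + ![(y : ℂ) + (-1), s]) := by
    rw [vec2_add, smul_vec2]
    exact vec2_eq (by ring) (by ring)
  rw [hsplit, mulVec_smul, mulVec_add, hexp (one_pow 2), hexp (by norm_num), neg_one_mul, neg_neg,
    one_mul, ← Complex.cos_sub_sin_I, ← Complex.cos_add_sin_I]
  simp only [vec2_add, smul_vec2, smul_eq_mul]
  refine vec2_eq ?_ ?_ <;> push_cast <;> ring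
end

section
/- Let E, t, y be real numbers with 0 ≤ y ≤ 1, let M(E,y) be the 2×2 complex matrix E·!![1+y², y·√(1−y²); y·√(1−y²), 1−y²], and define X₁ = (1/√2)·(√(1+y), √(1−y))ᵀ and X₂ = (1/√2)·(−√(1−y), √(1+y))ᵀ in ℂ². Then exp(−i·t·M(E,y))·X₁ = e^{−iE(1+y)t}·X₁ and exp(−i·t·M(E,y))·X₂ = e^{−iE(1−y)t}·X₂. -/
/-!
Since `√(1 - y²) = √(1 + y) √(1 - y)`, a direct computation shows that `X₁` and `X₂` are
eigenvectors of `M(E, y)` with the real eigenvalues `E(1 + y)` and `E(1 - y)`. On an eigenvector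
of `A` with eigenvalue `c`, every term `Aᵏ / k!` of the exponential series acts as `cᵏ / k!`,
so `exp A` acts as `exp c`.
-/

open Matrix

namespace Matrix

variable {n : Type*} [Fintype n] [DecidableEq n]

theorem pow_mulVec_of_mulVec_eq_smul_s5 {R : Type*} [CommSemiring R] {A : Matrix n n R}
    {v : n → R} {c : R} (h : A *ᵥ v = c • v) (k : ℕ) : (A ^ k) *ᵥ v = c ^ k • v := by
  induction k with
  | zero => simp
  | succ k ih => rw [pow_succ', ← mulVec_mulVec, ih, mulVec_smul, h, smul_smul, pow_succ]

open scoped Norms.Operator in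
theorem exp_mulVec_of_mulVec_eq_smul_s5 {𝕂 : Type*} [RCLike 𝕂] {A : Matrix n n 𝕂} {v : n → 𝕂}
    {c : 𝕂} (h : A *ᵥ v = c • v) : NormedSpace.exp A *ᵥ v = NormedSpace.exp c • v := by
  have hA : HasSum (fun k : ℕ => ((k.factorial : 𝕂)⁻¹ • A ^ k) *ᵥ v)
      (NormedSpace.exp A *ᵥ v) :=
    (NormedSpace.exp_series_hasSum_exp' (𝕂 := 𝕂) A).map (mulVec.addMonoidHomLeft v)
      (continuous_id.matrix_mulVec continuous_const)
  have hc := (NormedSpace.exp_series_hasSum_exp' (𝕂 := 𝕂) c).smul_const v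
  simp only [smul_mulVec, pow_mulVec_of_mulVec_eq_smul_s5 h, smul_smul] at hA
  exact hA.unique hc

theorem exp_neg_I_mul_smul_mulVec_of_mulVec_eq_smul {H : Matrix n n ℂ} {v : n → ℂ} {μ : ℝ}
    (h : H *ᵥ v = (μ : ℂ) • v) (t : ℝ) :
    NormedSpace.exp ((-(Complex.I * (t : ℂ))) • H) *ᵥ v =
      Complex.exp (-(Complex.I * ((μ * t : ℝ) : ℂ))) • v := by
  rw [Complex.exp_eq_exp_ℂ]
  refine exp_mulVec_of_mulVec_eq_smul_s5 ?_
  rw [smul_mulVec, h, smul_smul]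
  push_cast
  ring_nf

end Matrix

theorem Real.sqrt_one_sub_sq_eq_mul {y : ℝ} (hy : -1 ≤ y) :
    √(1 - y ^ 2) = √(1 + y) * √(1 - y) := by
  rw [← Real.sqrt_mul (by linarith)]
  ring_nf

theorem searchHamiltonianMatrix_mulVec_eigenvectors {E y : ℝ} (hy : -1 ≤ y) (hy' : y ≤ 1) :
    searchHamiltonianMatrix E y *ᵥ ![(√(1 + y) : ℂ), (√(1 - y) : ℂ)] =
        ((E * (1 + y) : ℝ) : ℂ) • ![(√(1 + y) : ℂ), (√(1 - y) : ℂ)] ∧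
      searchHamiltonianMatrix E y *ᵥ ![-(√(1 - y) : ℂ), (√(1 + y) : ℂ)] =
        ((E * (1 - y) : ℝ) : ℂ) • ![-(√(1 - y) : ℂ), (√(1 + y) : ℂ)] := by
  have ha : ((√(1 + y) : ℝ) : ℂ) ^ 2 = 1 + y := by exact_mod_cast Real.sq_sqrt (by linarith)
  have hb : ((√(1 - y) : ℝ) : ℂ) ^ 2 = 1 - y := by exact_mod_cast Real.sq_sqrt (by linarith)
  refine ⟨?_, ?_⟩ <;> ext i <;> fin_cases i <;>
    simp only [searchHamiltonianMatrix, Real.sqrt_one_sub_sq_eq_mul hy, mulVec, dotProduct,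
      Fin.sum_univ_two, Matrix.smul_apply, of_apply, cons_val', cons_val_fin_one, cons_val_zero,
      cons_val_one, Pi.smul_apply, smul_eq_mul] <;>
    push_cast
  · linear_combination (E : ℂ) * y * √(1 + y) * hb
  · linear_combination (E : ℂ) * y * √(1 - y) * ha
  · linear_combination (E : ℂ) * y * √(1 - y) * ha
  · linear_combination -(E : ℂ) * y * √(1 + y) * hb

/-- **Theorem 2.3(ii)** of Chen–Diao: the evolution operator `e^{−iHt}`
acts on the eigenvectors `X₁`, `X₂` by the phases `e^{−iE(1+y)t}`, `e^{−iE(1−y)t}`. -/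
theorem exp_searchHamiltonianMatrix_eigenvectors (E t y : ℝ) (hy0 : 0 ≤ y) (hy1 : y ≤ 1)
    (X₁ X₂ : Fin 2 → ℂ)
    (hX₁ : X₁ = (1 / (Real.sqrt 2 : ℂ)) •
        ![(Real.sqrt (1 + y) : ℂ), (Real.sqrt (1 - y) : ℂ)])
    (hX₂ : X₂ = (1 / (Real.sqrt 2 : ℂ)) •
        ![-(Real.sqrt (1 - y) : ℂ), (Real.sqrt (1 + y) : ℂ)]) :
    (NormedSpace.exp ((-(Complex.I * (t : ℂ))) • searchHamiltonianMatrix E y)).mulVec X₁ =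
        Complex.exp (-(Complex.I * ((E * (1 + y) * t : ℝ) : ℂ))) • X₁ ∧
    (NormedSpace.exp ((-(Complex.I * (t : ℂ))) • searchHamiltonianMatrix E y)).mulVec X₂ =
        Complex.exp (-(Complex.I * ((E * (1 - y) * t : ℝ) : ℂ))) • X₂ := by
  obtain ⟨hv₁, hv₂⟩ := searchHamiltonianMatrix_mulVec_eigenvectors (E := E) (by linarith) hy1
  subst hX₁ hX₂
  constructor
  · rw [mulVec_smul, exp_neg_I_mul_smul_mulVec_of_mulVec_eq_smul hv₁, smul_comm]
  · rw [mulVec_smul, exp_neg_I_mul_smul_mulVec_of_mulVec_eq_smul hv₂, smul_comm]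
end

section
/- Let M be a positive integer and let Δ be a real number with 0 < Δ < 1/M. Then sin²(MΔπ)/(M²·sin²(Δπ)) + sin²(M(1/M − Δ)π)/(M²·sin²((1/M − Δ)π)) ≥ 8/π². -/
/-!
With `u = MΔ ∈ (0, 1)` both numerators equal `sin² (uπ)`, and `|sin x| ≤ |x|` bounds the
denominators by `(uπ)²` and `((1 - u)π)²`. It remains to show
`8 u² (1 - u)² ≤ sin² (uπ) (u² + (1 - u)²)`, which is symmetric under `u ↦ 1 - u` with equality
at `u = 1/2`. For `u ≤ 1/4` concavity of `sin` gives `sin (uπ) ≥ 2√2 u`, already enough; for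
`1/4 ≤ u ≤ 1/2` the Taylor bound `cos x ≥ 1 - x²/2` at `x = π(1/2 - u)` reduces it to a
polynomial inequality that only needs `π² ≤ 10`.
-/

namespace Real

theorem mul_sin_le_sin_mul {θ a : ℝ} (hθ₀ : 0 ≤ θ) (hθ₁ : θ ≤ 1) (ha₀ : 0 ≤ a) (haπ : a ≤ π) :
    θ * sin a ≤ sin (θ * a) := by
  simpa using strictConcaveOn_sin_Icc.concaveOn.2 ⟨le_rfl, pi_pos.le⟩ ⟨ha₀, haπ⟩
    (sub_nonneg.2 hθ₁) hθ₀ (sub_add_cancel 1 θ)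

theorem eight_mul_sq_le_sin_mul_pi_sq {u : ℝ} (h₀ : 0 ≤ u) (h₁ : u ≤ 1 / 4) :
    8 * u ^ 2 ≤ sin (u * π) ^ 2 := by
  have hchord := mul_sin_le_sin_mul (θ := 4 * u) (a := π / 4) (by positivity) (by linarith)
    (by positivity) (by linarith [pi_pos])
  rw [sin_pi_div_four, show 4 * u * (π / 4) = u * π by ring] at hchord
  calc 8 * u ^ 2 = (4 * u * (√2 / 2)) ^ 2 := by
        rw [mul_pow, div_pow, sq_sqrt zero_le_two]; ring
    _ ≤ sin (u * π) ^ 2 := pow_le_pow_left₀ (by positivity) hchord 2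

theorem eight_mul_sq_le_cos_pi_mul_sq {t : ℝ} (h₀ : 0 ≤ t) (h₁ : t ≤ 1 / 4) :
    8 * (1 / 4 - t ^ 2) ^ 2 ≤ cos (π * t) ^ 2 * (1 / 2 + 2 * t ^ 2) := by
  have hπ : π ^ 2 ≤ 10 := by nlinarith [pi_lt_d2, pi_pos]
  have hs : t ^ 2 ≤ 1 / 16 := by nlinarith
  have hbase : 0 ≤ 1 - π ^ 2 * t ^ 2 / 2 := by nlinarith
  have hcos : 1 - π ^ 2 * t ^ 2 / 2 ≤ cos (π * t) := by
    simpa [mul_pow] using one_sub_sq_div_two_le_cos (x := π * t)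
  have hpoly : 8 * (1 / 4 - t ^ 2) ^ 2 ≤ (1 - π ^ 2 * t ^ 2 / 2) ^ 2 * (1 / 2 + 2 * t ^ 2) := by
    -- the difference is `t² (6 - π²/2 - 16 t²) + t⁴ (π² - 8)² / 8 + π⁴ t⁶ / 2`
    have hgap : 0 ≤ t ^ 2 * (6 - π ^ 2 / 2 - 16 * t ^ 2) := mul_nonneg (sq_nonneg t) (by linarith)
    nlinarith [sq_nonneg (t ^ 2 * (π ^ 2 - 8)), pow_nonneg (sq_nonneg (π * t)) 3]
  calc 8 * (1 / 4 - t ^ 2) ^ 2 ≤ (1 - π ^ 2 * t ^ 2 / 2) ^ 2 * (1 / 2 + 2 * t ^ 2) := hpoly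
    _ ≤ cos (π * t) ^ 2 * (1 / 2 + 2 * t ^ 2) := by gcongr

theorem eight_mul_sq_le_sin_mul_pi_sq_mul {u : ℝ} (h₀ : 0 ≤ u) (h₁ : u ≤ 1) :
    8 * (u * (1 - u)) ^ 2 ≤ sin (u * π) ^ 2 * (u ^ 2 + (1 - u) ^ 2) := by
  wlog hhalf : u ≤ 1 / 2 generalizing u
  · have hsymm := this (u := 1 - u) (by linarith) (by linarith) (by linarith)
    rw [sub_sub_cancel, show (1 - u) * π = π - u * π by ring, sin_pi_sub] at hsymm
    linarith
  rcases le_or_gt u (1 / 4) with hquarter | hquarter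
  · have hsin := eight_mul_sq_le_sin_mul_pi_sq h₀ hquarter
    calc 8 * (u * (1 - u)) ^ 2 = 8 * u ^ 2 * (1 - u) ^ 2 := by ring
      _ ≤ sin (u * π) ^ 2 * (1 - u) ^ 2 := by gcongr
      _ ≤ sin (u * π) ^ 2 * (u ^ 2 + (1 - u) ^ 2) := by gcongr; nlinarith
  · obtain ⟨t, rfl⟩ : ∃ t, u = 1 / 2 - t := ⟨1 / 2 - u, by ring⟩
    have hcos := eight_mul_sq_le_cos_pi_mul_sq (t := t) (by linarith) (by linarith)
    rw [show (1 / 2 - t) * π = π / 2 - π * t by ring, sin_pi_div_two_sub]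
    convert hcos using 2 <;> ring

theorem eight_div_pi_sq_le_sin_sq_div_add_sin_sq_div {u : ℝ} (h₀ : 0 < u) (h₁ : u < 1) :
    8 / π ^ 2 ≤ sin (u * π) ^ 2 / (u * π) ^ 2 + sin (u * π) ^ 2 / ((1 - u) * π) ^ 2 := by
  have hkey := eight_mul_sq_le_sin_mul_pi_sq_mul h₀.le h₁.le
  have h₁' : 0 < 1 - u := sub_pos.2 h₁
  rw [div_add_div _ _ (by positivity) (by positivity), div_le_div_iff₀ (by positivity) (by positivity)]
  linear_combination π ^ 4 * hkey

theorem div_mul_sq_le_div_sq_mul_sin_sq {a c x : ℝ} (ha : 0 ≤ a) (hc : c ≠ 0) (hx₀ : 0 < x)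
    (hxπ : x < π) : a / (c * x) ^ 2 ≤ a / (c ^ 2 * sin x ^ 2) := by
  have hsin : 0 < sin x := sin_pos_of_pos_of_lt_pi hx₀ hxπ
  rw [mul_pow]
  exact div_le_div_of_nonneg_left ha (by positivity)
    (mul_le_mul_of_nonneg_left sin_sq_le_sq (sq_nonneg c))

end Real

open Real

/-- The key inequality in **Theorem 2.4** of Chen–Diao: the total probability
of the two integers nearest to `My` in the phase-estimation measurement is at
least `8/π²`. -/
theorem phase_estimation_success_probability (M : ℕ) (hM : 0 < M)
    (Δ : ℝ) (h0 : 0 < Δ) (h1 : Δ < 1 / (M : ℝ)) :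
    8 / Real.pi ^ 2 ≤
      Real.sin ((M : ℝ) * Δ * Real.pi) ^ 2 / ((M : ℝ) ^ 2 * Real.sin (Δ * Real.pi) ^ 2) +
      Real.sin ((M : ℝ) * (1 / (M : ℝ) - Δ) * Real.pi) ^ 2 /
        ((M : ℝ) ^ 2 * Real.sin ((1 / (M : ℝ) - Δ) * Real.pi) ^ 2) := by
  have hM₀ : (0 : ℝ) < M := Nat.cast_pos.2 hM
  have hM₁ : 1 / (M : ℝ) ≤ 1 := div_le_one_of_le₀ (Nat.one_le_cast.2 hM) hM₀.le
  set u := (M : ℝ) * Δ with hu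
  have hu₀ : 0 < u := by positivity
  have hu₁ : u < 1 := by simpa [hM₀.ne'] using mul_lt_mul_of_pos_left h1 hM₀
  have hcompl : (M : ℝ) * (1 / M - Δ) = 1 - u := by rw [hu]; field_simp
  have hΔπ : Δ * π < π := by nlinarith [pi_pos]
  have hcomplπ : 0 < (1 / M - Δ) * π ∧ (1 / M - Δ) * π < π := by
    constructor <;> nlinarith [pi_pos]
  rw [hcompl, show (1 - u) * π = π - u * π by ring, sin_pi_sub]
  calc 8 / π ^ 2
      ≤ sin (u * π) ^ 2 / (M * (Δ * π)) ^ 2 + sin (u * π) ^ 2 / (M * ((1 / M - Δ) * π)) ^ 2 := by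
        rw [← mul_assoc, ← mul_assoc, hcompl]
        exact eight_div_pi_sq_le_sin_sq_div_add_sin_sq_div hu₀ hu₁
    _ ≤ _ := add_le_add
        (div_mul_sq_le_div_sq_mul_sin_sq (sq_nonneg _) hM₀.ne' (by positivity) hΔπ)
        (div_mul_sq_le_div_sq_mul_sin_sq (sq_nonneg _) hM₀.ne' hcomplπ.1 hcomplπ.2)
end

section
/- Let M be a positive integer, let y be a real number, and for each integer k with 0 ≤ k ≤ M−1 define α_k(y) = (1/M)·∑_{j=0}^{M−1} exp(2πi·j·(y − k/M)). Let m be an integer with m > 1. Then the sum of |α_k(y)|² over all k ∈ {0, 1, …, M−1} with d(y, k/M) > m/M is at most 1/(2(m−1)), where d(y₁, y₂) = min_{j ∈ ℤ} |y₁ − y₂ + j|. -/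
/-!
`α_k(y)` is a normalized geometric sum with ratio `z = e^{2πi(y - k/M)}`, and Jordan's inequality
gives `|z - 1| ≥ 4 d(y, k/M)`, so `|α_k(y)|² ≤ 1 / (4 σ_k²)` with `σ_k = ±M d(y, k/M)`.
For distinct `k, l < M` the difference `σ_k - σ_l` is a nonzero integer, so the far `σ_k` of
each sign are `1`-separated and exceed `m` in absolute value; comparing `1/σ²` with
`1/(σ - 1) - 1/σ` and telescoping bounds `∑ 1/σ_k²` by `1/(m - 1)` for each sign.
-/

open Finset
open scoped Classical

lemma iInf_abs_add_intCast (x : ℝ) : ⨅ j : ℤ, |x + j| = |x - round x| := by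
  refine le_antisymm ?_ (le_ciInf fun j => by simpa [sub_neg_eq_add] using round_le x (-j))
  have hbdd : BddBelow (Set.range fun j : ℤ => |x + j|) := ⟨0, by rintro _ ⟨j, rfl⟩; positivity⟩
  simpa [sub_eq_add_neg] using ciInf_le hbdd (-round x)

lemma four_mul_abs_sub_round_le_norm_exp_sub_one (x : ℝ) :
    4 * |x - round x| ≤ ‖Complex.exp (2 * Real.pi * Complex.I * x) - 1‖ := by
  set δ := x - round x
  have hperiod : Complex.exp (2 * Real.pi * Complex.I * x)
      = Complex.exp (Complex.I * ((2 * Real.pi * δ : ℝ) : ℂ)) := by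
    rw [show (x : ℂ) = δ + round x by simp [δ], Complex.exp_eq_exp_iff_exists_int]
    exact ⟨round x, by push_cast; ring⟩
  have hπδ : |Real.pi * δ| ≤ Real.pi / 2 := by
    rw [abs_mul, abs_of_pos Real.pi_pos]
    nlinarith [abs_sub_round x, Real.pi_pos]
  rw [hperiod, Complex.norm_exp_I_mul_ofReal_sub_one, norm_mul, Real.norm_ofNat, Real.norm_eq_abs,
    show 2 * Real.pi * δ / 2 = Real.pi * δ by ring]
  calc 4 * |δ| = 2 * (2 / Real.pi * |Real.pi * δ|) := by
        rw [abs_mul, abs_of_pos Real.pi_pos]; field_simp; ring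
    _ ≤ 2 * |Real.sin (Real.pi * δ)| := by gcongr; exact Real.mul_abs_le_abs_sin hπδ

lemma two_mul_abs_sub_round_mul_norm_sum_exp_le_one (N : ℕ) (x : ℝ) :
    2 * |x - round x| * ‖∑ j ∈ range N, Complex.exp (2 * Real.pi * Complex.I * j * x)‖ ≤ 1 := by
  set z := Complex.exp (2 * Real.pi * Complex.I * x)
  have hz : ‖z‖ = 1 := by
    rw [show z = Complex.exp (((2 * Real.pi * x : ℝ) : ℂ) * Complex.I) by
      simp only [z]; push_cast; ring_nf]
    exact Complex.norm_exp_ofReal_mul_I _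
  have hpow : ∀ j : ℕ, Complex.exp (2 * Real.pi * Complex.I * j * x) = z ^ j := fun j => by
    rw [← Complex.exp_nat_mul]; ring_nf
  -- `(∑ z^j) (z - 1) = z^N - 1` needs no case distinction at `z = 1`
  have hgeom : ‖∑ j ∈ range N, z ^ j‖ * ‖z - 1‖ ≤ 2 := by
    rw [← norm_mul, geom_sum_mul]
    calc ‖z ^ N - 1‖ ≤ ‖z ^ N‖ + ‖(1 : ℂ)‖ := norm_sub_le _ _
      _ = 2 := by rw [norm_pow, hz]; norm_num
  simp only [hpow]
  nlinarith [four_mul_abs_sub_round_le_norm_exp_sub_one x, norm_nonneg (∑ j ∈ range N, z ^ j)]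

lemma two_mul_abs_mul_norm_amplitude_le_one (M : ℕ) (x : ℝ) :
    2 * |M * (x - round x)| *
      ‖1 / (M : ℂ) * ∑ j ∈ range M, Complex.exp (2 * Real.pi * Complex.I * j * x)‖ ≤ 1 := by
  rcases Nat.eq_zero_or_pos M with rfl | hM
  · simp
  have hMR : (0 : ℝ) < M := Nat.cast_pos.mpr hM
  have hsum := two_mul_abs_sub_round_mul_norm_sum_exp_le_one M x
  rw [norm_mul, norm_div, norm_one, Complex.norm_natCast, abs_mul, Nat.abs_cast]
  generalize ‖∑ j ∈ range M, Complex.exp (2 * Real.pi * Complex.I * j * x)‖ = A at hsum ⊢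
  calc 2 * (M * |x - round x|) * (1 / M * A) = 2 * |x - round x| * A * (M * (1 / M)) := by ring
    _ ≤ 1 := by rwa [mul_one_div_cancel hMR.ne', mul_one]

lemma one_div_sq_le_one_div_sub_one_sub_one_div {t : ℝ} (ht : 1 < t) :
    1 / t ^ 2 ≤ 1 / (t - 1) - 1 / t := by
  rw [div_sub_div _ _ (by linarith) (by linarith), div_le_div_iff₀ (by positivity) (by nlinarith)]
  nlinarith

section Separated

variable {ι : Type*} (f : ι → ℝ) {a : ℝ}

lemma sum_one_div_sq_le_of_separated_of_le (ha : 0 < a) (s : Finset ι)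
    (hsep : ∀ i ∈ s, ∀ j ∈ s, i ≠ j → 1 ≤ |f i - f j|) (hlo : ∀ i ∈ s, a + 1 ≤ f i)
    {c : ℝ} (hac : a ≤ c) (hhi : ∀ i ∈ s, f i ≤ c) :
    ∑ i ∈ s, 1 / f i ^ 2 ≤ 1 / a - 1 / c := by
  induction s using Finset.induction_on_max_value f generalizing c with
  | empty => simp only [sum_empty, sub_nonneg]; exact one_div_le_one_div_of_le ha hac
  | insert i s hi hmax ih =>
    have hfi : a + 1 ≤ f i := hlo i (mem_insert_self i s)
    have hbelow : ∀ j ∈ s, f j ≤ f i - 1 := fun j hj => by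
      have := hsep i (mem_insert_self i s) j (mem_insert_of_mem hj) (fun h => hi (h ▸ hj))
      rw [abs_of_nonneg (by linarith [hmax j hj])] at this
      linarith
    have hs := ih (fun j hj k hk => hsep j (mem_insert_of_mem hj) k (mem_insert_of_mem hk))
      (fun j hj => hlo j (mem_insert_of_mem hj)) (by linarith) hbelow
    rw [sum_insert hi]
    have hc : 1 / c ≤ 1 / f i := one_div_le_one_div_of_le (by linarith) (hhi i (mem_insert_self i s))
    linarith [one_div_sq_le_one_div_sub_one_sub_one_div (show 1 < f i by linarith)]

lemma sum_one_div_sq_le_of_separated (ha : 0 < a) (s : Finset ι)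
    (hsep : ∀ i ∈ s, ∀ j ∈ s, i ≠ j → 1 ≤ |f i - f j|) (hlo : ∀ i ∈ s, a + 1 ≤ f i) :
    ∑ i ∈ s, 1 / f i ^ 2 ≤ 1 / a := by
  obtain ⟨c, hc⟩ := (s.image f).exists_le
  have hmax : ∑ i ∈ s, 1 / f i ^ 2 ≤ 1 / a - 1 / max a c :=
    sum_one_div_sq_le_of_separated_of_le f ha s hsep hlo (le_max_left a c)
      fun i hi => (hc (f i) (mem_image_of_mem f hi)).trans (le_max_right a c)
  have : 0 < 1 / max a c := one_div_pos.mpr (lt_max_of_lt_left ha)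
  linarith

lemma sum_one_div_sq_le_of_separated_abs (ha : 0 < a) (s : Finset ι)
    (hsep : ∀ i ∈ s, ∀ j ∈ s, i ≠ j → 1 ≤ |f i - f j|) (hlo : ∀ i ∈ s, a + 1 ≤ |f i|) :
    ∑ i ∈ s, 1 / f i ^ 2 ≤ 2 / a := by
  rw [← sum_filter_add_sum_filter_not s (fun i => 0 ≤ f i)]
  have hpos : ∑ i ∈ s with 0 ≤ f i, 1 / f i ^ 2 ≤ 1 / a :=
    sum_one_div_sq_le_of_separated f ha _
      (fun i hi j hj => hsep i (mem_of_mem_filter i hi) j (mem_of_mem_filter j hj))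
      fun i hi => by
        have := hlo i (mem_of_mem_filter i hi)
        rwa [abs_of_nonneg (mem_filter.mp hi).2] at this
  have hneg : ∑ i ∈ s with ¬0 ≤ f i, 1 / (-f i) ^ 2 ≤ 1 / a :=
    sum_one_div_sq_le_of_separated (fun i => -f i) ha _
      (fun i hi j hj hij => by
        rw [neg_sub_neg, abs_sub_comm]
        exact hsep i (mem_of_mem_filter i hi) j (mem_of_mem_filter j hj) hij)
      fun i hi => by
        have := hlo i (mem_of_mem_filter i hi)
        rwa [abs_of_neg (not_le.mp (mem_filter.mp hi).2)] at this
  simp only [neg_sq] at hneg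
  rw [show 2 / a = 1 / a + 1 / a by ring]
  exact add_le_add hpos hneg

end Separated

/-- `|phaseOffset M y k| = M · d(y, k/M)`. -/
noncomputable def phaseOffset (M : ℕ) (y k : ℝ) : ℝ :=
  M * (y - k / M - round (y - k / M))

lemma one_le_abs_phaseOffset_sub {M k l : ℕ} (y : ℝ) (hk : k < M) (hl : l < M) (hkl : k ≠ l) :
    1 ≤ |phaseOffset M y k - phaseOffset M y l| := by
  set n : ℤ := l - k + M * (round (y - l / M) - round (y - k / M))
  have hn : phaseOffset M y k - phaseOffset M y l = n := by
    have hM : (M : ℝ) ≠ 0 := Nat.cast_ne_zero.mpr (by omega)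
    simp only [phaseOffset, n]
    push_cast
    field_simp
    ring
  have hn0 : n ≠ 0 := fun h => by
    have hdvd : (M : ℤ) ∣ (k : ℤ) - l := ⟨round (y - l / M) - round (y - k / M), by linarith⟩
    have := Int.eq_zero_of_abs_lt_dvd hdvd (abs_sub_lt_iff.mpr ⟨by omega, by omega⟩)
    omega
  rw [hn]
  exact_mod_cast Int.one_le_abs hn0

theorem phase_estimation_far_outcomes_probability_general (M : ℕ) (y : ℝ)
    (m : ℤ) (hm : 1 < m) :
    ∑ k ∈ (Finset.range M).filter
        (fun k => (m : ℝ) / (M : ℝ) < ⨅ j : ℤ, |y - (k : ℝ) / (M : ℝ) + (j : ℝ)|),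
      (‖(1 / (M : ℂ)) * ∑ j ∈ Finset.range M,
          Complex.exp (2 * (Real.pi : ℂ) * Complex.I * (j : ℂ) *
            ((y - (k : ℝ) / (M : ℝ) : ℝ) : ℂ))‖) ^ 2 ≤
      1 / (2 * ((m : ℝ) - 1)) := by
  -- the sum runs over `(range M).image Nat.cast : Finset ℝ`, elaborated as a monadic bind
  rw [bind_pure_comp, fmap_def, filter_image, sum_image fun _ _ _ _ h => Nat.cast_injective h]
  set S := (range M).filter fun k : ℕ => (m : ℝ) / M < ⨅ j : ℤ, |y - k / M + j|
  have hmR : (1 : ℝ) < m := by exact_mod_cast hm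
  have hfar : ∀ k ∈ S, (m : ℝ) < |phaseOffset M y k| := fun k hk => by
    obtain ⟨hkM, hk⟩ := mem_filter.mp hk
    have hMR : (0 : ℝ) < M := Nat.cast_pos.mpr (by have := mem_range.mp hkM; omega)
    rw [iInf_abs_add_intCast, div_lt_iff₀' hMR] at hk
    rwa [phaseOffset, abs_mul, Nat.abs_cast]
  have hsep : ∀ k ∈ S, ∀ l ∈ S, k ≠ l → 1 ≤ |phaseOffset M y k - phaseOffset M y l| :=
    fun k hk l hl => one_le_abs_phaseOffset_sub y (mem_range.mp (mem_filter.mp hk).1)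
      (mem_range.mp (mem_filter.mp hl).1)
  calc _ ≤ ∑ k ∈ S, 1 / 4 * (1 / phaseOffset M y k ^ 2) := sum_le_sum fun k hk => by
        have hσ : 0 < |phaseOffset M y k| := by linarith [hfar k hk]
        rw [show 1 / 4 * (1 / phaseOffset M y k ^ 2) = (1 / (2 * |phaseOffset M y k|)) ^ 2 by
          rw [div_pow, mul_pow, sq_abs]; ring]
        gcongr
        rw [le_div_iff₀ (by positivity), mul_comm]
        exact two_mul_abs_mul_norm_amplitude_le_one M (y - k / M)
    _ ≤ 1 / 4 * (2 / ((m : ℝ) - 1)) := by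
        rw [← mul_sum]
        gcongr
        exact sum_one_div_sq_le_of_separated_abs _ (by linarith) S hsep
          fun k hk => by linarith [hfar k hk]
    _ = 1 / (2 * ((m : ℝ) - 1)) := by field_simp; ring

/-- **Corollary 2.7(iv)** of Chen–Diao: the total probability of
phase-estimation outcomes `k` whose circle distance from the true phase `y`
exceeds `m/M` is at most `1/(2(m−1))`.  Here
`α_k(y) = (1/M)·∑_{j<M} e^{2πij(y−k/M)}` and the circle distance is
`d(y₁,y₂) = min_{j∈ℤ} |y₁−y₂+j|`. -/
theorem phase_estimation_far_outcomes_probability (M : ℕ) (hM : 0 < M) (y : ℝ)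
    (m : ℤ) (hm : 1 < m) :
    ∑ k ∈ (Finset.range M).filter
        (fun k => (m : ℝ) / (M : ℝ) < ⨅ j : ℤ, |y - (k : ℝ) / (M : ℝ) + (j : ℝ)|),
      (‖(1 / (M : ℂ)) * ∑ j ∈ Finset.range M,
          Complex.exp (2 * (Real.pi : ℂ) * Complex.I * (j : ℂ) *
            ((y - (k : ℝ) / (M : ℝ) : ℝ) : ℂ))‖) ^ 2 ≤
      1 / (2 * ((m : ℝ) - 1)) :=
  phase_estimation_far_outcomes_probability_general M y m hm
end

section
/- Let A₁, …, Aₙ be finite sets of elements of some type (n ≥ 1), let T be a finite set with T ⊆ A₁ ∪ … ∪ Aₙ, and assume basic confidence: Aᵢ ∩ T ≠ ∅ for every i = 1, …, n. Let α₁, …, αₙ be positive reals with ∑_{i=1}^n αᵢ = 1. For each element w of A₁ ∪ … ∪ Aₙ set W(w) = ∑_{i : w ∈ Aᵢ} αᵢ, let ν = (∑_{w ∈ A₁∪…∪Aₙ} W(w)²)^{1/2}, and let y = (∑_{w ∈ T} W(w)²)^{1/2} / ν. Then y ≥ 1/(√n · √|A₁ ∪ … ∪ Aₙ|); consequently, for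 every E > 0 the time T = π/(2Ey) satisfies T ≤ (π·√n/(2E))·√|A₁ ∪ … ∪ Aₙ|. -/
open Finset

/-! Exchanging the order of summation, `∑_{w ∈ S} ∑_{i ∋ w} cᵢ²` counts each `cᵢ²` once per element
of `S ∩ Aᵢ`. For the target set this is at least `∑ᵢ cᵢ²` by basic confidence, while `W(w)² ≤ ∑_{i ∋ w} cᵢ²`
by positivity of the weights; for the whole union it is at most `|A₁ ∪ … ∪ Aₙ| · ∑ᵢ cᵢ²`, while
`W(w)² ≤ n ∑_{i ∋ w} cᵢ²` by Cauchy–Schwarz. Hence `ν² ≤ n · |A₁ ∪ … ∪ Aₙ| · ∑_{w ∈ T} W(w)²`. -/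

section TotalWeight

variable {α ι : Type*} [DecidableEq α] [Fintype ι] (A : ι → Finset α) (c : ι → ℝ)

def totalWeight (w : α) : ℝ :=
  ∑ i ∈ univ.filter (fun i => w ∈ A i), c i

theorem sum_sum_filter_mem_eq_sum_card_mul (S : Finset α) (f : ι → ℝ) :
    ∑ w ∈ S, ∑ i ∈ univ.filter (fun i => w ∈ A i), f i =
      ∑ i, ((S.filter (fun w => w ∈ A i)).card : ℝ) * f i := by
  simp_rw [sum_filter]
  rw [sum_comm]
  refine sum_congr rfl fun i _ => ?_
  rw [← sum_filter, sum_const, nsmul_eq_mul]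

theorem sum_sq_le_sum_totalWeight_sq {T : Finset α} (hc : ∀ i, 0 ≤ c i)
    (hT : ∀ i, (A i ∩ T).Nonempty) :
    ∑ i, c i ^ 2 ≤ ∑ w ∈ T, totalWeight A c w ^ 2 := calc
  ∑ i, c i ^ 2 ≤ ∑ i, ((T.filter (fun w => w ∈ A i)).card : ℝ) * c i ^ 2 := by
    refine sum_le_sum fun i _ => le_mul_of_one_le_left (sq_nonneg _) ?_
    obtain ⟨x, hx⟩ := hT i
    rw [mem_inter] at hx
    exact_mod_cast card_pos.2 ⟨x, mem_filter.2 ⟨hx.2, hx.1⟩⟩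
  _ = ∑ w ∈ T, ∑ i ∈ univ.filter (fun i => w ∈ A i), c i ^ 2 :=
    (sum_sum_filter_mem_eq_sum_card_mul A T _).symm
  _ ≤ ∑ w ∈ T, totalWeight A c w ^ 2 :=
    sum_le_sum fun w _ => sum_sq_le_sq_sum_of_nonneg fun i _ => hc i

theorem sum_totalWeight_sq_le (S : Finset α) :
    ∑ w ∈ S, totalWeight A c w ^ 2 ≤ Fintype.card ι * S.card * ∑ i, c i ^ 2 := calc
  ∑ w ∈ S, totalWeight A c w ^ 2
      ≤ ∑ w ∈ S, (Fintype.card ι : ℝ) * ∑ i ∈ univ.filter (fun i => w ∈ A i), c i ^ 2 := by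
    refine sum_le_sum fun w _ => sq_sum_le_card_mul_sum_sq.trans ?_
    gcongr
    exact card_le_univ _
  _ = Fintype.card ι * ∑ i, ((S.filter (fun w => w ∈ A i)).card : ℝ) * c i ^ 2 := by
    rw [← mul_sum, sum_sum_filter_mem_eq_sum_card_mul]
  _ ≤ Fintype.card ι * ∑ i, (S.card : ℝ) * c i ^ 2 := by
    gcongr
    exact filter_subset _ _
  _ = Fintype.card ι * S.card * ∑ i, c i ^ 2 := by rw [← mul_sum, mul_assoc]

end TotalWeight

theorem one_div_sqrt_le_sqrt_div_sqrt {a b k : ℝ} (ha : 0 < a) (hb : 0 < b) (h : b ≤ k * a) :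
    1 / √k ≤ √a / √b := by
  have hk : 0 < k := pos_of_mul_pos_left (hb.trans_le h) ha.le
  rw [← Real.sqrt_div ha.le, one_div, ← Real.sqrt_inv]
  refine Real.sqrt_le_sqrt ?_
  rw [inv_eq_one_div, div_le_div_iff₀ hk hb, one_mul, mul_comm]
  exact h

theorem div_le_mul_of_one_div_le {p m y : ℝ} (hp : 0 ≤ p) (hm : 0 < m) (h : 1 / m ≤ y) :
    p / y ≤ p * m := by
  have hy : 0 < y := (one_div_pos.2 hm).trans_le h
  rw [div_eq_mul_one_div p y]
  exact mul_le_mul_of_nonneg_left ((one_div_le hm hy).1 h) hp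

theorem basic_confidence_overlap_lower_bound_general {α : Type*} [DecidableEq α]
    {n : ℕ} (hn : 1 ≤ n)
    (A : Fin n → Finset α) (T : Finset α)
    (hT : T ⊆ Finset.univ.biUnion A)
    (hbc : ∀ i, (A i ∩ T).Nonempty)
    (c : Fin n → ℝ) (hc : ∀ i, 0 < c i)
    (W : α → ℝ)
    (hW : ∀ w, W w = ∑ i ∈ Finset.univ.filter (fun i => w ∈ A i), c i)
    (ν y : ℝ)
    (hν : ν = Real.sqrt (∑ w ∈ Finset.univ.biUnion A, W w ^ 2))
    (hy : y = Real.sqrt (∑ w ∈ T, W w ^ 2) / ν) :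
    1 / (Real.sqrt n * Real.sqrt ((Finset.univ.biUnion A).card : ℝ)) ≤ y ∧
    ∀ E : ℝ, 0 < E →
      Real.pi / (2 * E * y) ≤
        Real.pi * Real.sqrt n / (2 * E) * Real.sqrt ((Finset.univ.biUnion A).card : ℝ) := by
  obtain rfl : W = totalWeight A c := funext hW
  set U := univ.biUnion A
  have hsq : 0 < ∑ i, c i ^ 2 := sum_pos (fun i _ => pow_pos (hc i) 2) ⟨⟨0, hn⟩, mem_univ _⟩
  have htarget := sum_sq_le_sum_totalWeight_sq A c (fun i => (hc i).le) hbc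
  have hunion := sum_totalWeight_sq_le A c U
  have hTU : ∑ w ∈ T, totalWeight A c w ^ 2 ≤ ∑ w ∈ U, totalWeight A c w ^ 2 :=
    sum_le_sum_of_subset_of_nonneg hT fun _ _ _ => sq_nonneg _
  rw [Fintype.card_fin] at hunion
  have key : 1 / (√n * √U.card) ≤ y := by
    rw [hy, hν, ← Real.sqrt_mul (Nat.cast_nonneg n)]
    refine one_div_sqrt_le_sqrt_div_sqrt (hsq.trans_le htarget) (hsq.trans_le (htarget.trans hTU)) ?_
    exact hunion.trans (mul_le_mul_of_nonneg_left htarget (by positivity))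
  have hU : 0 < U.card := by
    obtain ⟨x, hx⟩ := hbc ⟨0, hn⟩
    exact card_pos.2 ⟨x, mem_biUnion.2 ⟨_, mem_univ _, (mem_inter.1 hx).1⟩⟩
  refine ⟨key, fun E hE => ?_⟩
  rw [← div_div, mul_div_right_comm, mul_assoc]
  exact div_le_mul_of_one_div_le (by positivity) (by positivity) key

/-- **Theorem 3.1** of Chen–Diao: under basic confidence (each information set
`Aᵢ` meets the target set `𝒯`), the overlap `y` of the initial state with the
target subspace satisfies `y ≥ 1/(√n·√(l+R))`, where `l+R = |A₁ ∪ … ∪ Aₙ|`;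
consequently the search time `T = π/(2Ey)` is at most `(π√n/(2E))·√(l+R)`. -/
theorem basic_confidence_overlap_lower_bound {α : Type*} [DecidableEq α]
    {n : ℕ} (hn : 1 ≤ n)
    (A : Fin n → Finset α) (T : Finset α)
    (hT : T ⊆ Finset.univ.biUnion A)
    (hbc : ∀ i, (A i ∩ T).Nonempty)
    (c : Fin n → ℝ) (hc : ∀ i, 0 < c i) (hcsum : ∑ i, c i = 1)
    (W : α → ℝ)
    (hW : ∀ w, W w = ∑ i ∈ Finset.univ.filter (fun i => w ∈ A i), c i)
    (ν y : ℝ)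
    (hν : ν = Real.sqrt (∑ w ∈ Finset.univ.biUnion A, W w ^ 2))
    (hy : y = Real.sqrt (∑ w ∈ T, W w ^ 2) / ν) :
    1 / (Real.sqrt n * Real.sqrt ((Finset.univ.biUnion A).card : ℝ)) ≤ y ∧
    ∀ E : ℝ, 0 < E →
      Real.pi / (2 * E * y) ≤
        Real.pi * Real.sqrt n / (2 * E) * Real.sqrt ((Finset.univ.biUnion A).card : ℝ) :=
  basic_confidence_overlap_lower_bound_general hn A T hT hbc c hc W hW ν y hν hy
end

section
/- Let A₁, …, Aₙ be finite sets of elements of some type (n ≥ 1), let T be a finite set with T ⊆ A₁ ∪ … ∪ Aₙ, assume Aᵢ ∩ T ≠ ∅ for every i (basic confidence), and let α₁, …, αₙ be positive reals with ∑_{i=1}^n αᵢ = 1. For each element w set W(w) = ∑_{i : w ∈ Aᵢ} αᵢ. Then ∑_{w ∈ T} W(w)² ≥ ∑_{i=1}^n αᵢ². -/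
/-!
Pick for every index `i` a target item `f i ∈ Aᵢ ∩ T`. Grouping the indices by `f i` and using
`∑ xⱼ² ≤ (∑ xⱼ)²` for nonnegative `xⱼ` bounds `∑ᵢ αᵢ²` by the sum over `w ∈ T` of the squared
weight of the fibre `f⁻¹(w)`, and that fibre weight is at most `W(w)`, since `i ∈ f⁻¹(w)` forces
`w ∈ Aᵢ`.
-/

open Finset

theorem sum_sq_le_sum_sq_sum_fiberwise {ι α : Type*} [DecidableEq α] {s : Finset ι}
    {t : Finset α} {g : ι → α} (hg : ∀ i ∈ s, g i ∈ t) {c : ι → ℝ}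
    (hc : ∀ i ∈ s, 0 ≤ c i) :
    ∑ i ∈ s, c i ^ 2 ≤ ∑ w ∈ t, (∑ i ∈ s with g i = w, c i) ^ 2 := by
  rw [← sum_fiberwise_of_maps_to hg]
  gcongr with w
  exact sum_sq_le_sq_sum_of_nonneg fun i hi => hc i (mem_filter.mp hi).1

theorem sum_sq_le_sum_sq_sum_of_inter_nonempty {ι α : Type*} [Fintype ι] [DecidableEq α]
    {A : ι → Finset α} {T : Finset α} (hAT : ∀ i, (A i ∩ T).Nonempty) {c : ι → ℝ}
    (hc : ∀ i, 0 ≤ c i) :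
    ∑ i, c i ^ 2 ≤ ∑ w ∈ T, (∑ i with w ∈ A i, c i) ^ 2 := by
  choose f hf using hAT
  calc ∑ i, c i ^ 2
      ≤ ∑ w ∈ T, (∑ i with f i = w, c i) ^ 2 :=
        sum_sq_le_sum_sq_sum_fiberwise (fun i _ => (mem_inter.mp (hf i)).2) fun i _ => hc i
    _ ≤ ∑ w ∈ T, (∑ i with w ∈ A i, c i) ^ 2 := by
        gcongr with w _ i
        · exact sum_nonneg fun i _ => hc i
        · exact fun i _ _ => hc i
        · rintro rfl
          exact (mem_inter.mp (hf i)).1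

theorem target_weight_lower_bound_general {α : Type*} [DecidableEq α]
    {n : ℕ}
    (A : Fin n → Finset α) (T : Finset α)
    (hbc : ∀ i, (A i ∩ T).Nonempty)
    (c : Fin n → ℝ) (hc : ∀ i, 0 < c i)
    (W : α → ℝ)
    (hW : ∀ w, W w = ∑ i ∈ Finset.univ.filter (fun i => w ∈ A i), c i) :
    ∑ i, c i ^ 2 ≤ ∑ w ∈ T, W w ^ 2 := by
  simp only [hW]
  exact sum_sq_le_sum_sq_sum_of_inter_nonempty hbc fun i => (hc i).le

/-- **Inequality (3.7)** in the proof of Theorem 3.1 of Chen–Diao: under basic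
confidence (each information set `Aᵢ` meets the target set `𝒯`), the squared
weight of the target set satisfies `∑_{w∈𝒯} W(w)² ≥ ∑ᵢ αᵢ²`. -/
theorem target_weight_lower_bound {α : Type*} [DecidableEq α]
    {n : ℕ} (hn : 1 ≤ n)
    (A : Fin n → Finset α) (T : Finset α)
    (hT : T ⊆ Finset.univ.biUnion A)
    (hbc : ∀ i, (A i ∩ T).Nonempty)
    (c : Fin n → ℝ) (hc : ∀ i, 0 < c i) (hcsum : ∑ i, c i = 1)
    (W : α → ℝ)
    (hW : ∀ w, W w = ∑ i ∈ Finset.univ.filter (fun i => w ∈ A i), c i) :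
    ∑ i, c i ^ 2 ≤ ∑ w ∈ T, W w ^ 2 :=
  target_weight_lower_bound_general A T hbc c hc W hW
end

section
/- Let A₁, …, Aₙ be finite sets of elements of some type (n ≥ 1), let T ⊆ A₁ ∪ … ∪ Aₙ with Aᵢ ∩ T ≠ ∅ for every i (basic confidence), let α₁, …, αₙ be positive reals with ∑αᵢ = 1, define W(w) = ∑_{i : w ∈ Aᵢ} αᵢ, ν = (∑_{w ∈ A₁∪…∪Aₙ} W(w)²)^{1/2}, and y = (∑_{w∈T} W(w)²)^{1/2}/ν. Suppose moreover that |A₁ ∪ … ∪ Aₙ| ≤ C·N^δ for reals C > 0, N ≥ 1, δ > 0. Then for every E > 0, the time T = π/(2Ey) satisfies T ≤ (π/(2E))·√(n·C)·N^{δ/2}. -/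
/-!
Every weight `W(w)` lies in `[0, 1]`, so `ν² ≤ |A₁ ∪ … ∪ Aₙ| ≤ C N^δ`. Basic confidence gives each
`Aᵢ` a target item, so `∑_{w ∈ T} W(w)² ≥ ∑ᵢ αᵢ² ≥ 1/n`, the last step by Cauchy–Schwarz. Hence
`1/y = ν / (∑_{w ∈ T} W(w)²)^{1/2} ≤ √n · √(C N^δ)`.
-/

open Finset

section InfoWeight

variable {ι α : Type*} [Fintype ι] [DecidableEq α]

def infoWeight (A : ι → Finset α) (c : ι → ℝ) (w : α) : ℝ :=
  ∑ i ∈ univ.filter (fun i => w ∈ A i), c i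

variable {A : ι → Finset α} {c : ι → ℝ}

lemma infoWeight_nonneg (hc : ∀ i, 0 ≤ c i) (w : α) : 0 ≤ infoWeight A c w :=
  sum_nonneg fun i _ => hc i

lemma infoWeight_le_one (hc : ∀ i, 0 ≤ c i) (hcsum : ∑ i, c i = 1) (w : α) :
    infoWeight A c w ≤ 1 :=
  hcsum ▸ sum_le_sum_of_subset_of_nonneg (filter_subset _ _) fun i _ _ => hc i

lemma sum_infoWeight_sq_le_card (hc : ∀ i, 0 ≤ c i) (hcsum : ∑ i, c i = 1) (s : Finset α) :
    ∑ w ∈ s, infoWeight A c w ^ 2 ≤ #s := by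
  calc ∑ w ∈ s, infoWeight A c w ^ 2 ≤ ∑ _w ∈ s, (1 : ℝ) :=
        sum_le_sum fun w _ =>
          pow_le_one₀ (infoWeight_nonneg hc w) (infoWeight_le_one hc hcsum w)
    _ = #s := by simp

/-- Each `αᵢ²` is counted at least once, at a target item of `Aᵢ`. -/
lemma sum_sq_le_sum_infoWeight_sq (hc : ∀ i, 0 ≤ c i) {T : Finset α}
    (hbc : ∀ i, (A i ∩ T).Nonempty) :
    ∑ i, c i ^ 2 ≤ ∑ w ∈ T, infoWeight A c w ^ 2 := by
  calc ∑ i, c i ^ 2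
      ≤ ∑ i, ∑ w ∈ T.filter (· ∈ A i), c i ^ 2 := by
        refine sum_le_sum fun i _ => ?_
        obtain ⟨w, hw⟩ := hbc i
        obtain ⟨hwA, hwT⟩ := mem_inter.mp hw
        exact single_le_sum (f := fun _ => c i ^ 2) (fun _ _ => sq_nonneg _)
          (mem_filter.mpr ⟨hwT, hwA⟩)
    _ = ∑ w ∈ T, ∑ i ∈ univ.filter (fun i => w ∈ A i), c i ^ 2 := by
        simp only [sum_filter]
        exact sum_comm
    _ ≤ ∑ w ∈ T, infoWeight A c w ^ 2 :=
        sum_le_sum fun w _ => sum_sq_le_sq_sum_of_nonneg fun i _ => hc i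

lemma one_le_card_mul_sum_infoWeight_sq (hc : ∀ i, 0 ≤ c i) (hcsum : ∑ i, c i = 1)
    {T : Finset α} (hbc : ∀ i, (A i ∩ T).Nonempty) :
    1 ≤ Fintype.card ι * ∑ w ∈ T, infoWeight A c w ^ 2 := by
  have hcs := sq_sum_le_card_mul_sum_sq (s := univ) (f := c)
  rw [hcsum, one_pow, card_univ] at hcs
  exact hcs.trans (mul_le_mul_of_nonneg_left (sum_sq_le_sum_infoWeight_sq hc hbc)
    (Nat.cast_nonneg _))

end InfoWeight

lemma div_sqrt_le_sqrt_mul {ν S m K : ℝ} (hνK : ν ≤ √K) (hm : 0 ≤ m)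
    (hmS : 1 ≤ m * S) : ν / √S ≤ √(m * K) := by
  have hS : 0 < √S := Real.sqrt_pos.mpr (pos_of_mul_pos_right (one_pos.trans_le hmS) hm)
  rw [div_le_iff₀ hS, Real.sqrt_mul hm, mul_comm √m, mul_assoc, ← Real.sqrt_mul hm]
  calc ν ≤ √K := hνK
    _ ≤ √K * √(m * S) :=
        le_mul_of_one_le_right (Real.sqrt_nonneg K) (Real.one_le_sqrt.mpr hmS)

lemma sqrt_mul_rpow {N : ℝ} (hN : 0 ≤ N) (a δ : ℝ) :
    √(a * N ^ δ) = √a * N ^ (δ / 2) := by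
  rw [Real.sqrt_mul' a (Real.rpow_nonneg hN δ), Real.sqrt_eq_rpow (N ^ δ), ← Real.rpow_mul hN]
  ring_nf

theorem basic_confidence_search_time_bound_general {α : Type*} [DecidableEq α]
    {n : ℕ}
    (A : Fin n → Finset α) (T : Finset α)
    (hbc : ∀ i, (A i ∩ T).Nonempty)
    (c : Fin n → ℝ) (hc : ∀ i, 0 < c i) (hcsum : ∑ i, c i = 1)
    (W : α → ℝ)
    (hW : ∀ w, W w = ∑ i ∈ Finset.univ.filter (fun i => w ∈ A i), c i)
    (ν y : ℝ)
    (hν : ν = Real.sqrt (∑ w ∈ Finset.univ.biUnion A, W w ^ 2))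
    (hy : y = Real.sqrt (∑ w ∈ T, W w ^ 2) / ν)
    (C N δ : ℝ) (hN : 1 ≤ N)
    (hcard : ((Finset.univ.biUnion A).card : ℝ) ≤ C * N ^ δ) :
    ∀ E : ℝ, 0 < E →
      Real.pi / (2 * E * y) ≤
        Real.pi / (2 * E) * Real.sqrt ((n : ℝ) * C) * N ^ (δ / 2) := by
  intro E hE
  obtain rfl : W = infoWeight A c := funext hW
  have hc' : ∀ i, 0 ≤ c i := fun i => (hc i).le
  have hνK : ν ≤ √(C * N ^ δ) :=
    hν ▸ Real.sqrt_le_sqrt ((sum_infoWeight_sq_le_card hc' hcsum _).trans hcard)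
  have hnS := one_le_card_mul_sum_infoWeight_sq hc' hcsum hbc
  rw [Fintype.card_fin] at hnS
  calc Real.pi / (2 * E * y)
      = Real.pi / (2 * E) * (ν / √(∑ w ∈ T, infoWeight A c w ^ 2)) := by
        rw [hy, div_mul_eq_div_div, div_div_eq_mul_div, mul_div_assoc]
    _ ≤ Real.pi / (2 * E) * √(n * (C * N ^ δ)) := by
        gcongr
        exact div_sqrt_le_sqrt_mul hνK (Nat.cast_nonneg n) hnS
    _ = Real.pi / (2 * E) * √(n * C) * N ^ (δ / 2) := by
        rw [← mul_assoc, sqrt_mul_rpow (zero_le_one.trans hN), mul_assoc]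

/-- **Corollary 3.2** of Chen–Diao: under basic confidence, if the union of
the information sets has cardinality `l+R ≤ C·N^δ`, then for every `E > 0` the
search time `T = π/(2Ey)` is at most `(π/(2E))·√(nC)·N^{δ/2}`, i.e. the first
item is found in time `O(√n·N^{δ/2})`. -/
theorem basic_confidence_search_time_bound {α : Type*} [DecidableEq α]
    {n : ℕ} (hn : 1 ≤ n)
    (A : Fin n → Finset α) (T : Finset α)
    (hT : T ⊆ Finset.univ.biUnion A)
    (hbc : ∀ i, (A i ∩ T).Nonempty)
    (c : Fin n → ℝ) (hc : ∀ i, 0 < c i) (hcsum : ∑ i, c i = 1)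
    (W : α → ℝ)
    (hW : ∀ w, W w = ∑ i ∈ Finset.univ.filter (fun i => w ∈ A i), c i)
    (ν y : ℝ)
    (hν : ν = Real.sqrt (∑ w ∈ Finset.univ.biUnion A, W w ^ 2))
    (hy : y = Real.sqrt (∑ w ∈ T, W w ^ 2) / ν)
    (C N δ : ℝ) (hC : 0 < C) (hN : 1 ≤ N) (hδ : 0 < δ)
    (hcard : ((Finset.univ.biUnion A).card : ℝ) ≤ C * N ^ δ) :
    ∀ E : ℝ, 0 < E →
      Real.pi / (2 * E * y) ≤
        Real.pi / (2 * E) * Real.sqrt ((n : ℝ) * C) * N ^ (δ / 2) :=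
  basic_confidence_search_time_bound_general A T hbc c hc hcsum W hW ν y hν hy C N δ hN hcard
end
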